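/- arXiv:1610.07320 — 5 statements merged into one kernel-verified Lean document; each statement's English description precedes it below -/
import Mathlib

section
/- Let G=(V,E) be a connected simple graph, X_0 : V → ℤ/3ℤ an initial 3-coloring, and (X_t)_{t≥0} the 3-color CCA trajectory started from X_0. Then for every vertex x ∈ V and every t ≥ 1, the number of excitations ne_t(x) equals the maximum of the path integral ∫_W dX_0 over all walks W in G starting at x with at most t edges. -/
noncomputable section
attribute [local instance] Classical.propDecidable

open Filter

variable {V : Type*}

/-- Unique representative in `{-1,0,1}` of an element of `ℤ/3ℤ`. -/
def ZMod.repInt (a : ZMod 3) : ℤ := if a = 0 then 0 else if a = 1 then 1 else -1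

/-- One step of the 3-color cyclic cellular automaton: a vertex advances its color
by one (mod 3) iff some neighbor currently has the successor color. -/
def ccaStep (G : SimpleGraph V) (X : V → ZMod 3) : V → ZMod 3 :=
  fun v => if ∃ u, G.Adj v u ∧ X u = X v + 1 then X v + 1 else X v

/-- The CCA trajectory started from `X₀`. -/
def ccaTraj (G : SimpleGraph V) (X₀ : V → ZMod 3) : ℕ → V → ZMod 3 :=
  fun t => (ccaStep G)^[t] X₀

/-- A vertex is excited at time `t` for CCA iff its color advances. -/
def ccaExcited (G : SimpleGraph V) (X₀ : V → ZMod 3) (t : ℕ) (v : V) : Prop :=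
  ccaTraj G X₀ (t + 1) v = ccaTraj G X₀ t v + 1

/-- Number of excitations of `x` at times `0, …, t-1` (CCA). -/
def ccaNe (G : SimpleGraph V) (X₀ : V → ZMod 3) (t : ℕ) (x : V) : ℕ :=
  ((Finset.range t).filter fun s => ccaExcited G X₀ s x).card

/-- The CCA 1-form `dX` on ordered pairs of vertices. -/
def dXcca (X : V → ZMod 3) (u v : V) : ℤ := (X v - X u).repInt

/-- Path integral of the CCA 1-form along a walk. -/
def walkIntCCA {G : SimpleGraph V} (X : V → ZMod 3) {x y : V} (w : G.Walk x y) : ℤ :=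
  (w.darts.map fun d => dXcca X d.toProd.1 d.toProd.2).sum

/-! An edge `(u, v)` with `dX(u, v) = 1` makes `u` fire and one with `dX(u, v) = -1` makes `v`
fire, so one CCA step changes `dX` exactly by the gradient of the excitation indicator `e`.
Hence `∫_w dX₀ = ∫_w dX₁ + e(x) - e(y)` for a walk `w` from `x` to `y`, while
`ne_{t+1}(x) = e(x) + ne_t(x)` for the trajectory started at `X₁`, and induction on `t` reduces
the theorem to comparing walks of length `t + 1` with walks of length `t`. -/

namespace ZMod

lemma repInt_nonpos_of_ne_one {a : ZMod 3} (ha : a ≠ 1) : a.repInt ≤ 0 := by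
  revert a; decide

/-- The side conditions exclude exactly the shifts that would cross the jump of `repInt` between
`1` and `-1`. -/
lemma repInt_sub_add_ite (a b : ZMod 3) (p q : Prop) [Decidable p] [Decidable q]
    (hp : b - a = 1 → p) (hq : a - b = 1 → q) :
    ((b + if q then 1 else 0) - (a + if p then 1 else 0)).repInt
      = (b - a).repInt + (if q then 1 else 0) - (if p then 1 else 0) := by
  by_cases p <;> by_cases q <;> simp_all <;> revert a b <;> decide

end ZMod

def ccaHasSuccNeighbor (G : SimpleGraph V) (X : V → ZMod 3) (v : V) : Prop :=
  ∃ u, G.Adj v u ∧ X u = X v + 1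

def ccaExcInd (G : SimpleGraph V) (X : V → ZMod 3) (v : V) : ℤ :=
  if ccaHasSuccNeighbor G X v then 1 else 0

def walkIntegralsUpTo (G : SimpleGraph V) (X : V → ZMod 3) (x : V) (t : ℕ) : Set ℤ :=
  {n | ∃ (y : V) (w : G.Walk x y), w.length ≤ t ∧ walkIntCCA X w = n}

section CCA

variable {G : SimpleGraph V}

lemma ccaExcInd_eq_one {X : V → ZMod 3} {v : V} (h : ccaHasSuccNeighbor G X v) :
    ccaExcInd G X v = 1 := if_pos h

lemma ccaExcInd_eq_zero {X : V → ZMod 3} {v : V} (h : ¬ccaHasSuccNeighbor G X v) :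
    ccaExcInd G X v = 0 := if_neg h

lemma ccaExcInd_nonneg (X : V → ZMod 3) (v : V) : 0 ≤ ccaExcInd G X v := by
  unfold ccaExcInd; split_ifs <;> simp

lemma ccaStep_apply (X : V → ZMod 3) (v : V) :
    ccaStep G X v = X v + if ccaHasSuccNeighbor G X v then 1 else 0 := by
  unfold ccaStep ccaHasSuccNeighbor
  split_ifs <;> simp

lemma dXcca_ccaStep {X : V → ZMod 3} {u v : V} (h : G.Adj u v) :
    dXcca (ccaStep G X) u v = dXcca X u v + ccaExcInd G X v - ccaExcInd G X u := by
  simp only [dXcca, ccaExcInd, ccaStep_apply]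
  refine ZMod.repInt_sub_add_ite _ _ _ _ (fun huv => ⟨v, h, ?_⟩) (fun hvu => ⟨u, h.symm, ?_⟩)
  · rw [← huv]; ring
  · rw [← hvu]; ring

lemma dXcca_ccaStep_le {X : V → ZMod 3} {u v : V} (h : G.Adj u v) :
    dXcca (ccaStep G X) u v ≤ ccaExcInd G X v := by
  have hu : dXcca X u v ≤ ccaExcInd G X u := by
    by_cases hsucc : X v = X u + 1
    · rw [ccaExcInd_eq_one ⟨v, h, hsucc⟩, dXcca, hsucc, add_sub_cancel_left]
      rfl
    · have : X v - X u ≠ 1 := fun h1 => hsucc (by rw [← h1]; ring)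
      exact (ZMod.repInt_nonpos_of_ne_one this).trans (ccaExcInd_nonneg X u)
  rw [dXcca_ccaStep h]
  linarith

@[simp]
lemma walkIntCCA_nil (X : V → ZMod 3) (x : V) :
    walkIntCCA X (SimpleGraph.Walk.nil : G.Walk x x) = 0 := rfl

@[simp]
lemma walkIntCCA_cons (X : V → ZMod 3) {x z y : V} (h : G.Adj x z) (p : G.Walk z y) :
    walkIntCCA X (SimpleGraph.Walk.cons h p) = dXcca X x z + walkIntCCA X p := by
  simp [walkIntCCA]

@[simp]
lemma walkIntCCA_concat (X : V → ZMod 3) {x z y : V} (p : G.Walk x z) (h : G.Adj z y) :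
    walkIntCCA X (p.concat h) = walkIntCCA X p + dXcca X z y := by
  simp [walkIntCCA, SimpleGraph.Walk.darts_concat]

lemma walkIntCCA_eq_of_dXcca_eq {X Y : V → ZMod 3} (f : V → ℤ)
    (hXY : ∀ u v, G.Adj u v → dXcca Y u v = dXcca X u v + f v - f u)
    {x y : V} (w : G.Walk x y) : walkIntCCA Y w = walkIntCCA X w + f y - f x := by
  induction w with
  | nil => simp
  | cons h p ih => simp only [walkIntCCA_cons, hXY _ _ h, ih]; ring

lemma walkIntCCA_ccaStep (X : V → ZMod 3) {x y : V} (w : G.Walk x y) :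
    walkIntCCA X w = walkIntCCA (ccaStep G X) w + ccaExcInd G X x - ccaExcInd G X y := by
  rw [walkIntCCA_eq_of_dXcca_eq _ (fun _ _ h => dXcca_ccaStep h) w]
  ring

lemma ccaExcited_zero_iff (X₀ : V → ZMod 3) (x : V) :
    ccaExcited G X₀ 0 x ↔ ccaHasSuccNeighbor G X₀ x := by
  change ccaStep G X₀ x = X₀ x + 1 ↔ _
  rw [ccaStep_apply]
  split_ifs with h <;> simp [h]

lemma ccaExcited_succ_iff (X₀ : V → ZMod 3) (s : ℕ) (x : V) :
    ccaExcited G X₀ (s + 1) x ↔ ccaExcited G (ccaStep G X₀) s x := by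
  simp only [ccaExcited, ccaTraj, Function.iterate_succ_apply]

lemma ccaNe_succ (X₀ : V → ZMod 3) (t : ℕ) (x : V) :
    (ccaNe G X₀ (t + 1) x : ℤ) = ccaExcInd G X₀ x + ccaNe G (ccaStep G X₀) t x := by
  simp only [ccaNe, Finset.card_filter, Finset.sum_range_succ', ccaExcited_succ_iff,
    ccaExcited_zero_iff, ccaExcInd]
  push_cast
  ring

lemma isGreatest_walkIntegralsUpTo_zero (X : V → ZMod 3) (x : V) :
    IsGreatest (walkIntegralsUpTo G X x 0) 0 := by
  refine ⟨⟨x, .nil, le_rfl, rfl⟩, ?_⟩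
  rintro n ⟨y, w, hw, rfl⟩
  cases w with
  | nil => simp
  | cons => simp at hw

/-- A maximising walk ending at a vertex about to fire is prolonged by the edge to its
successor-coloured neighbour; conversely, by `dXcca_ccaStep_le`, the last edge of a walk of
length `t + 1` contributes at most the excitation at its end. -/
lemma IsGreatest.walkIntegralsUpTo_succ {X : V → ZMod 3} {x : V} {t : ℕ} {n : ℤ}
    (hn : IsGreatest (walkIntegralsUpTo G (ccaStep G X) x t) n) :
    IsGreatest (walkIntegralsUpTo G X x (t + 1)) (ccaExcInd G X x + n) := by
  obtain ⟨⟨y, w, hw, rfl⟩, hle⟩ := hn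
  refine ⟨?_, ?_⟩
  · by_cases hy : ccaHasSuccNeighbor G X y
    · obtain ⟨u, hyu, hu⟩ := hy
      refine ⟨u, w.concat hyu, by simp [hw], ?_⟩
      have hdX : dXcca X y u = 1 := by simp only [dXcca, hu, add_sub_cancel_left]; rfl
      rw [walkIntCCA_concat, walkIntCCA_ccaStep X w, hdX, ccaExcInd_eq_one ⟨u, hyu, hu⟩]
      ring
    · refine ⟨y, w, hw.trans t.le_succ, ?_⟩
      rw [walkIntCCA_ccaStep X w, ccaExcInd_eq_zero hy]
      ring
  · rintro _ ⟨z, v, hv, rfl⟩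
    rw [walkIntCCA_ccaStep X v]
    suffices walkIntCCA (ccaStep G X) v ≤ walkIntCCA (ccaStep G X) w + ccaExcInd G X z by
      linarith
    rcases le_or_gt v.length t with hvt | hvt
    · linarith [hle ⟨z, v, hvt, rfl⟩, ccaExcInd_nonneg (G := G) X z]
    · have hv_ne : ¬v.Nil := by rw [SimpleGraph.Walk.not_nil_iff_lt_length]; omega
      have hlast := v.adj_penultimate hv_ne
      rw [← SimpleGraph.Walk.concat_dropLast hlast, walkIntCCA_concat]
      have hdrop : v.dropLast.length ≤ t := by rw [SimpleGraph.Walk.length_dropLast]; omega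
      linarith [hle ⟨_, v.dropLast, hdrop, rfl⟩, dXcca_ccaStep_le (X := X) hlast]

end CCA

theorem cca_excitations_eq_max_walk_integral_general (G : SimpleGraph V)
    (X₀ : V → ZMod 3) (x : V) (t : ℕ) :
    IsGreatest {n : ℤ | ∃ (y : V) (w : G.Walk x y), w.length ≤ t ∧ walkIntCCA X₀ w = n}
      (ccaNe G X₀ t x : ℤ) := by
  change IsGreatest (walkIntegralsUpTo G X₀ x t) _
  induction t generalizing X₀ with
  | zero => simpa [ccaNe] using isGreatest_walkIntegralsUpTo_zero X₀ x
  | succ t ih =>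
    rw [ccaNe_succ]
    exact (ih _).walkIntegralsUpTo_succ

/-- Key lemma for CCA: the number of excitations of `x` in the first `t` steps is the
maximum of the path integral of `dX₀` over all walks starting at `x` of length at most `t`. -/
theorem cca_excitations_eq_max_walk_integral (G : SimpleGraph V)
    (hlf : ∀ v : V, (G.neighborSet v).Finite) (hconn : G.Connected)
    (X₀ : V → ZMod 3) (x : V) (t : ℕ) (ht : 1 ≤ t) :
    IsGreatest {n : ℤ | ∃ (y : V) (w : G.Walk x y), w.length ≤ t ∧ walkIntCCA X₀ w = n}
      (ccaNe G X₀ t x : ℤ) :=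
  cca_excitations_eq_max_walk_integral_general G X₀ x t
end
end

section
/- Let G=(V,E) be a connected simple graph, X_0 : V → ℤ/3ℤ an initial 3-coloring, and (X_t)_{t≥0} the 3-color GHM trajectory started from X_0. Then for every vertex x ∈ V and every t ≥ 1, the number of excitations ne_t(x) equals the maximum of the path integral ∫_W dX_0 over all walks W in G starting at x with at most t edges. -/
noncomputable section
attribute [local instance] Classical.propDecidable

open Filter

variable {V : Type*}

/-- One step of the 3-color Greenberg–Hastings model: color 0 becomes 1 iff some
neighbor has color 1 (otherwise stays 0); colors 1 and 2 advance by one (mod 3). -/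
def ghmStep (G : SimpleGraph V) (X : V → ZMod 3) : V → ZMod 3 :=
  fun v => if X v = 0 then (if ∃ u, G.Adj v u ∧ X u = 1 then 1 else 0) else X v + 1

/-- The GHM trajectory started from `X₀`. -/
def ghmTraj (G : SimpleGraph V) (X₀ : V → ZMod 3) : ℕ → V → ZMod 3 :=
  fun t => (ghmStep G)^[t] X₀

/-- A vertex is excited at time `t` for GHM iff its color changes from 0 to 1. -/
def ghmExcited (G : SimpleGraph V) (X₀ : V → ZMod 3) (t : ℕ) (v : V) : Prop :=
  ghmTraj G X₀ t v = 0 ∧ ghmTraj G X₀ (t + 1) v = 1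

/-- Number of excitations of `x` at times `0, …, t-1` (GHM). -/
def ghmNe (G : SimpleGraph V) (X₀ : V → ZMod 3) (t : ℕ) (x : V) : ℕ :=
  ((Finset.range t).filter fun s => ghmExcited G X₀ s x).card

/-- The GHM 1-form `dX` on ordered pairs of vertices. -/
def dXghm (X : V → ZMod 3) (u v : V) : ℤ :=
  if X u = 0 ∧ X v = 1 then 1 else if X u = 1 ∧ X v = 0 then -1 else 0

/-- Path integral of the GHM 1-form along a walk. -/
def walkIntGHM {G : SimpleGraph V} (X : V → ZMod 3) {x y : V} (w : G.Walk x y) : ℤ :=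
  (w.darts.map fun d => dXghm X d.toProd.1 d.toProd.2).sum

/-!
Give each vertex the height `3 · ne_t(x) + phase(X_t(x))`, where the phase of a color is its
position in the cycle `1 → 2 → 0 → 1`. A vertex's height goes up by one exactly when its color
changes, and otherwise stays put. By induction on `t`, across every edge `xu` the heights differ
from `3 · dX₀(x, u)` by at most one: the only way to break this is for `u` to advance while `x`
rests at `0`, but tightness forces `u` to have color `1`, which excites `x`. Reading the bound
modulo `3` gives `ne_{t+1}(x) ≥ ne_t(u) + dX₀(x, u)`, so walk integrals never exceed `ne_t(x)`;
conversely an excitation of `x` is triggered by a neighbour `u` that attains this bound, and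
following such neighbours backwards in time builds a walk realising `ne_t(x)`.
-/

def ghmAdvances (G : SimpleGraph V) (X : V → ZMod 3) (v : V) : Prop :=
  X v ≠ 0 ∨ ∃ u, G.Adj v u ∧ X u = 1

lemma ghmStep_apply (G : SimpleGraph V) (X : V → ZMod 3) (v : V) :
    ghmStep G X v = if ghmAdvances G X v then X v + 1 else X v := by
  unfold ghmStep ghmAdvances
  split_ifs <;> grind

lemma dXghm_swap (X : V → ZMod 3) (u v : V) : dXghm X v u = -dXghm X u v := by
  unfold dXghm
  split_ifs <;> simp_all

@[simp]
lemma walkIntGHM_nil {G : SimpleGraph V} (X : V → ZMod 3) {x : V} :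
    walkIntGHM X (SimpleGraph.Walk.nil : G.Walk x x) = 0 := by
  simp [walkIntGHM]

@[simp]
lemma walkIntGHM_cons {G : SimpleGraph V} (X : V → ZMod 3) {x u y : V} (h : G.Adj x u)
    (w : G.Walk u y) : walkIntGHM X (.cons h w) = dXghm X x u + walkIntGHM X w := by
  simp [walkIntGHM]

def ghmPhase (z : ZMod 3) : ℕ := (z - 1).val

@[simp] lemma ghmPhase_zero : ghmPhase 0 = 2 := rfl

@[simp] lemma ghmPhase_one : ghmPhase 1 = 0 := rfl

lemma ghmPhase_le_two (z : ZMod 3) : ghmPhase z ≤ 2 := by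
  revert z; decide

lemma one_le_ghmPhase {z : ZMod 3} (hz : z ≠ 1) : 1 ≤ ghmPhase z := by
  revert z; decide

section Trajectory

variable (G : SimpleGraph V) (X₀ : V → ZMod 3)

lemma ghmTraj_succ_apply (t : ℕ) (v : V) :
    ghmTraj G X₀ (t + 1) v = ghmStep G (ghmTraj G X₀ t) v := by
  simp only [ghmTraj, Function.iterate_succ_apply']

lemma ghmExcited_iff (t : ℕ) (v : V) :
    ghmExcited G X₀ t v ↔
      ghmTraj G X₀ t v = 0 ∧ ∃ u, G.Adj v u ∧ ghmTraj G X₀ t u = 1 := by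
  rw [ghmExcited, ghmTraj_succ_apply, ghmStep]
  split_ifs <;> simp_all

lemma ghmNe_zero (v : V) : ghmNe G X₀ 0 v = 0 := by
  simp [ghmNe]

lemma ghmNe_succ (t : ℕ) (v : V) :
    ghmNe G X₀ (t + 1) v = ghmNe G X₀ t v + if ghmExcited G X₀ t v then 1 else 0 := by
  rw [ghmNe, ghmNe, Finset.range_add_one, Finset.filter_insert]
  split_ifs
  · exact Finset.card_insert_of_notMem (by simp)
  · rfl

def ghmHeight (t : ℕ) (v : V) : ℤ :=
  3 * ghmNe G X₀ t v + ghmPhase (ghmTraj G X₀ t v)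

lemma ghmHeight_succ (t : ℕ) (v : V) :
    ghmHeight G X₀ (t + 1) v = ghmHeight G X₀ t v +
      if ghmAdvances G (ghmTraj G X₀ t) v then 1 else 0 := by
  have hphase : ∀ z : ZMod 3,
      (ghmPhase (z + 1) : ℤ) + (if z = 0 then 3 else 0) = ghmPhase z + 1 := by
    decide
  by_cases hadv : ghmAdvances G (ghmTraj G X₀ t) v
  · have hexc : ghmExcited G X₀ t v ↔ ghmTraj G X₀ t v = 0 := by
      rw [ghmExcited_iff]; unfold ghmAdvances at hadv; tauto
    have hz := hphase (ghmTraj G X₀ t v)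
    simp only [ghmHeight, ghmNe_succ, ghmTraj_succ_apply, ghmStep_apply, hexc, if_pos hadv]
    split_ifs at hz ⊢ <;> push_cast <;> omega
  · have hexc : ¬ghmExcited G X₀ t v := fun h =>
      hadv (Or.inr ((ghmExcited_iff G X₀ t v).1 h).2)
    simp [ghmHeight, ghmNe_succ, ghmTraj_succ_apply, ghmStep_apply, hexc, hadv]

lemma ghmHeight_le_succ (t : ℕ) (v : V) :
    ghmHeight G X₀ t v ≤ ghmHeight G X₀ (t + 1) v := by
  rw [ghmHeight_succ]
  split_ifs <;> omega

lemma ghmHeight_succ_le (t : ℕ) (v : V) :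
    ghmHeight G X₀ (t + 1) v ≤ ghmHeight G X₀ t v + 1 := by
  rw [ghmHeight_succ]
  split_ifs <;> omega

lemma three_mul_ghmNe_lt_ghmHeight_succ (t : ℕ) (v : V) :
    3 * (ghmNe G X₀ t v : ℤ) < ghmHeight G X₀ (t + 1) v := by
  have hdef : ghmHeight G X₀ t v = 3 * ghmNe G X₀ t v + ghmPhase (ghmTraj G X₀ t v) := rfl
  by_cases hv : ghmTraj G X₀ t v = 1
  · have h := ghmHeight_succ G X₀ t v
    have hadv : ghmAdvances G (ghmTraj G X₀ t) v := Or.inl (by simp [hv])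
    rw [if_pos hadv] at h
    rw [hv, ghmPhase_one] at hdef
    omega
  · have h := ghmHeight_le_succ G X₀ t v
    have hphase := one_le_ghmPhase hv
    omega

lemma ghmHeight_add_three_mul_dXghm_le (t : ℕ) {x u : V} (hxu : G.Adj x u) :
    ghmHeight G X₀ t u + 3 * dXghm X₀ x u ≤ ghmHeight G X₀ t x + 1 := by
  induction t with
  | zero =>
    have key : ∀ a b : ZMod 3, (ghmPhase b : ℤ) +
        3 * (if a = 0 ∧ b = 1 then 1 else if a = 1 ∧ b = 0 then -1 else 0) ≤
          ghmPhase a + 1 := by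
      decide
    simpa [ghmHeight, ghmNe_zero, ghmTraj, dXghm] using key (X₀ x) (X₀ u)
  | succ t ih =>
    have hu := ghmHeight_succ_le G X₀ t u
    by_cases hadv : ghmAdvances G (ghmTraj G X₀ t) x
    · have hx := ghmHeight_succ G X₀ t x
      rw [if_pos hadv] at hx
      omega
    -- `x` rests at `0` with no neighbour of color `1`, so `u` has phase `1` or `2` and the
    -- bound at time `t` holds with room to spare, modulo `3`.
    · have hx : ghmHeight G X₀ (t + 1) x = ghmHeight G X₀ t x := by
        rw [ghmHeight_succ, if_neg hadv, add_zero]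
      have hx0 : ghmTraj G X₀ t x = 0 := by
        by_contra h
        exact hadv (Or.inl h)
      have hu1 := one_le_ghmPhase fun h => hadv (Or.inr ⟨u, hxu, h⟩)
      have hu2 := ghmPhase_le_two (ghmTraj G X₀ t u)
      have hstrict : ghmHeight G X₀ t u + 3 * dXghm X₀ x u ≤ ghmHeight G X₀ t x := by
        simp only [ghmHeight, hx0, ghmPhase_zero] at ih ⊢
        omega
      omega

lemma ghmNe_add_dXghm_le_ghmNe_succ (t : ℕ) {x u : V} (hxu : G.Adj x u) :
    (ghmNe G X₀ t u : ℤ) + dXghm X₀ x u ≤ ghmNe G X₀ (t + 1) x := by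
  have hu := three_mul_ghmNe_lt_ghmHeight_succ G X₀ t u
  have hedge := ghmHeight_add_three_mul_dXghm_le G X₀ (t + 1) hxu
  have hx : ghmHeight G X₀ (t + 1) x =
      3 * ghmNe G X₀ (t + 1) x + ghmPhase (ghmTraj G X₀ (t + 1) x) := rfl
  have hphase := ghmPhase_le_two (ghmTraj G X₀ (t + 1) x)
  omega

lemma exists_adj_ghmNe_add_one_le {t : ℕ} {x : V} (hx : ghmExcited G X₀ t x) :
    ∃ u, G.Adj x u ∧ (ghmNe G X₀ t x : ℤ) + 1 ≤ ghmNe G X₀ t u + dXghm X₀ x u := by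
  obtain ⟨hx0, u, hxu, hu1⟩ := (ghmExcited_iff G X₀ t x).1 hx
  refine ⟨u, hxu, ?_⟩
  have hedge := ghmHeight_add_three_mul_dXghm_le G X₀ t hxu.symm
  rw [dXghm_swap] at hedge
  simp only [ghmHeight, hx0, hu1, ghmPhase_zero, ghmPhase_one] at hedge
  omega

lemma walkIntGHM_le_ghmNe {t : ℕ} {x y : V} (w : G.Walk x y) (hw : w.length ≤ t) :
    walkIntGHM X₀ w ≤ ghmNe G X₀ t x := by
  induction w generalizing t with
  | nil => simp
  | cons hxu w ih =>
    rw [SimpleGraph.Walk.length_cons] at hw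
    obtain ⟨s, rfl⟩ : ∃ s, t = s + 1 := ⟨t - 1, by omega⟩
    have hw' := ih (t := s) (by omega)
    have hstep := ghmNe_add_dXghm_le_ghmNe_succ G X₀ s hxu
    rw [walkIntGHM_cons]
    omega

lemma exists_walk_walkIntGHM_eq_ghmNe (t : ℕ) (x : V) :
    ∃ (y : V) (w : G.Walk x y), w.length ≤ t ∧ walkIntGHM X₀ w = ghmNe G X₀ t x := by
  induction t generalizing x with
  | zero => exact ⟨x, .nil, le_rfl, by simp [ghmNe_zero]⟩
  | succ t ih =>
    by_cases hx : ghmExcited G X₀ t x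
    · obtain ⟨u, hxu, hle⟩ := exists_adj_ghmNe_add_one_le G X₀ hx
      obtain ⟨y, w, hw, hint⟩ := ih u
      refine ⟨y, .cons hxu w, by simpa using hw, ?_⟩
      have hge := ghmNe_add_dXghm_le_ghmNe_succ G X₀ t hxu
      rw [ghmNe_succ, if_pos hx] at hge ⊢
      rw [walkIntGHM_cons]
      push_cast at hge ⊢
      omega
    · obtain ⟨y, w, hw, hint⟩ := ih x
      exact ⟨y, w, hw.trans t.le_succ, by rw [hint, ghmNe_succ, if_neg hx, add_zero]⟩

end Trajectory

theorem ghm_excitations_eq_max_walk_integral_general (G : SimpleGraph V)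
    (X₀ : V → ZMod 3) (x : V) (t : ℕ) :
    IsGreatest {n : ℤ | ∃ (y : V) (w : G.Walk x y), w.length ≤ t ∧ walkIntGHM X₀ w = n}
      (ghmNe G X₀ t x : ℤ) := by
  refine ⟨exists_walk_walkIntGHM_eq_ghmNe G X₀ t x, ?_⟩
  rintro n ⟨y, w, hw, rfl⟩
  exact walkIntGHM_le_ghmNe G X₀ w hw

/-- Key lemma for GHM: the number of excitations of `x` in the first `t` steps is the
maximum of the path integral of `dX₀` over all walks starting at `x` of length at most `t`. -/
theorem ghm_excitations_eq_max_walk_integral (G : SimpleGraph V)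
    (hlf : ∀ v : V, (G.neighborSet v).Finite) (hconn : G.Connected)
    (X₀ : V → ZMod 3) (x : V) (t : ℕ) (ht : 1 ≤ t) :
    IsGreatest {n : ℤ | ∃ (y : V) (w : G.Walk x y), w.length ≤ t ∧ walkIntGHM X₀ w = n}
      (ghmNe G X₀ t x : ℤ) :=
  ghm_excitations_eq_max_walk_integral_general G X₀ x t
end
end

section
/- Let G=(V,E) be a connected simple graph and (X_t)_{t≥0} the 3-color CCA trajectory of an initial 3-coloring X_0 : V → ℤ/3ℤ. If sup_t ne_t(x) < ∞ holds for some vertex x ∈ V, then it holds for every vertex. Moreover, for all x, y ∈ V one has limsup_{t→∞} ne_t(x)/t = limsup_{t→∞} ne_t(y)/t. -/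
noncomputable section
attribute [local instance] Classical.propDecidable

open Filter

variable {V : Type*}

/-! Across an edge `uv`, the integer `dXcca (X_t) u v ∈ {-1, 0, 1}` changes by exactly
`[v excited] - [u excited]` at each step: a neighbour one colour ahead always excites, so the
difference never wraps around modulo 3. Hence `ne_t v - ne_t u` stays within `2` on every edge
and within `2 · dist x y` between any two vertices, which gives both claims. -/

open scoped Topology

theorem ZMod.abs_repInt_le_one (a : ZMod 3) : |a.repInt| ≤ 1 := by
  revert a; decide

theorem ZMod.repInt_add_ite_sub_add_ite (a b : ZMod 3) {p q : Prop} [Decidable p] [Decidable q]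
    (hp : b = a + 1 → p) (hq : a = b + 1 → q) :
    ((b + if q then 1 else 0) - (a + if p then 1 else 0)).repInt =
      (b - a).repInt + (if q then 1 else 0) - (if p then 1 else 0) := by
  by_cases hp' : p <;> by_cases hq' : q <;> simp only [hp', hq', if_true, if_false] at hp hq ⊢ <;>
    revert a b <;> decide

section WalkBounds

variable {α : Type*} [AddCommGroup α] [LinearOrder α] [IsOrderedAddMonoid α]

theorem SimpleGraph.Walk.abs_sub_le_length_nsmul {G : SimpleGraph V} (f : V → α) {c : α}
    (hf : ∀ u v, G.Adj u v → |f v - f u| ≤ c) {x y : V} (w : G.Walk x y) :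
    |f y - f x| ≤ w.length • c := by
  induction w with
  | nil => simp
  | @cons x z y h w ih =>
    calc |f y - f x| ≤ |f y - f z| + |f z - f x| := abs_sub_le _ _ _
      _ ≤ w.length • c + c := add_le_add ih (hf x z h)
      _ = (w.cons h).length • c := by rw [SimpleGraph.Walk.length_cons, succ_nsmul]

theorem SimpleGraph.Connected.abs_sub_le_dist_nsmul {G : SimpleGraph V} (hconn : G.Connected)
    (f : V → α) {c : α} (hf : ∀ u v, G.Adj u v → |f v - f u| ≤ c) (x y : V) :
    |f y - f x| ≤ G.dist x y • c := by
  obtain ⟨w, hw⟩ := hconn.exists_walk_length_eq_dist x y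
  exact hw ▸ w.abs_sub_le_length_nsmul f hf

end WalkBounds

section Limsup

variable {ι α : Type*} [AddCommGroup α] [ConditionallyCompleteLinearOrder α] [DenselyOrdered α]
  [IsOrderedAddMonoid α] [TopologicalSpace α] [OrderTopology α]
  {f : Filter ι} [f.NeBot] {u v : ι → α}

theorem Filter.limsup_le_limsup_of_tendsto_sub_nhds_zero
    (hv : IsBoundedUnder (· ≤ ·) f v) (hv' : IsBoundedUnder (· ≥ ·) f v)
    (h : Tendsto (u - v) f (𝓝 0)) : limsup u f ≤ limsup v f := by
  calc limsup u f = limsup (v + (u - v)) f := by rw [add_sub_cancel]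
    _ ≤ limsup v f + limsup (u - v) f :=
      limsup_add_le hv' hv h.isBoundedUnder_ge.isCoboundedUnder_le h.isBoundedUnder_le
    _ = limsup v f := by rw [h.limsup_eq, add_zero]

theorem Filter.limsup_eq_limsup_of_tendsto_sub_nhds_zero
    (hu : IsBoundedUnder (· ≤ ·) f u) (hu' : IsBoundedUnder (· ≥ ·) f u)
    (hv : IsBoundedUnder (· ≤ ·) f v) (hv' : IsBoundedUnder (· ≥ ·) f v)
    (h : Tendsto (u - v) f (𝓝 0)) : limsup u f = limsup v f := by
  refine le_antisymm (limsup_le_limsup_of_tendsto_sub_nhds_zero hv hv' h)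
    (limsup_le_limsup_of_tendsto_sub_nhds_zero hu hu' ?_)
  simpa [Pi.sub_def] using h.neg

end Limsup

section CCA

variable {G : SimpleGraph V} {X₀ : V → ZMod 3}

theorem ccaTraj_succ_eq_ccaStep (t : ℕ) :
    ccaTraj G X₀ (t + 1) = ccaStep G (ccaTraj G X₀ t) :=
  Function.iterate_succ_apply' _ _ _

theorem ccaExcited_of_adj {t : ℕ} {u v : V} (h : G.Adj u v)
    (hv : ccaTraj G X₀ t v = ccaTraj G X₀ t u + 1) : ccaExcited G X₀ t u := by
  rw [ccaExcited, ccaTraj_succ_eq_ccaStep, ccaStep, if_pos ⟨v, h, hv⟩]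

theorem ccaTraj_succ_apply (t : ℕ) (v : V) :
    ccaTraj G X₀ (t + 1) v = ccaTraj G X₀ t v + if ccaExcited G X₀ t v then 1 else 0 := by
  by_cases h : ccaExcited G X₀ t v
  · rw [if_pos h]; exact h
  · rw [if_neg h, add_zero, ccaTraj_succ_eq_ccaStep, ccaStep, if_neg]
    rintro ⟨u, hu, hc⟩
    exact h (ccaExcited_of_adj hu hc)

theorem ccaNe_succ_s3 (t : ℕ) (v : V) :
    ccaNe G X₀ (t + 1) v = ccaNe G X₀ t v + if ccaExcited G X₀ t v then 1 else 0 := by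
  rw [ccaNe, ccaNe, Finset.range_add_one, Finset.filter_insert]
  split_ifs
  · exact Finset.card_insert_of_notMem (by simp)
  · rfl

theorem ccaNe_le (t : ℕ) (x : V) : ccaNe G X₀ t x ≤ t :=
  (Finset.card_filter_le _ _).trans (Finset.card_range t).le

theorem dXcca_ccaTraj {u v : V} (h : G.Adj u v) (t : ℕ) :
    dXcca (ccaTraj G X₀ t) u v = dXcca X₀ u v + ccaNe G X₀ t v - ccaNe G X₀ t u := by
  induction t with
  | zero => simp [ccaNe, ccaTraj]
  | succ t ih =>
    rw [dXcca, ccaTraj_succ_apply, ccaTraj_succ_apply, ZMod.repInt_add_ite_sub_add_ite _ _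
      (ccaExcited_of_adj h) (ccaExcited_of_adj h.symm), ← dXcca, ih, ccaNe_succ_s3, ccaNe_succ_s3]
    push_cast
    ring

theorem abs_ccaNe_sub_ccaNe_le_two {u v : V} (h : G.Adj u v) (t : ℕ) :
    |(ccaNe G X₀ t v : ℤ) - ccaNe G X₀ t u| ≤ 2 := by
  have hX := ZMod.abs_repInt_le_one (ccaTraj G X₀ t v - ccaTraj G X₀ t u)
  have hX₀ := ZMod.abs_repInt_le_one (X₀ v - X₀ u)
  have hdX := dXcca_ccaTraj (X₀ := X₀) h t
  rw [dXcca, dXcca] at hdX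
  rw [abs_le] at *
  omega

theorem abs_ccaNe_sub_ccaNe_le_dist (hconn : G.Connected) (t : ℕ) (x y : V) :
    |(ccaNe G X₀ t y : ℤ) - ccaNe G X₀ t x| ≤ 2 * G.dist x y := by
  simpa [mul_comm] using
    hconn.abs_sub_le_dist_nsmul (fun v => (ccaNe G X₀ t v : ℤ))
      (fun _ _ h => abs_ccaNe_sub_ccaNe_le_two h t) x y

theorem isBoundedUnder_ccaNe_div (x : V) :
    IsBoundedUnder (· ≤ ·) atTop (fun t : ℕ => (ccaNe G X₀ t x : ℝ) / t) ∧
      IsBoundedUnder (· ≥ ·) atTop (fun t : ℕ => (ccaNe G X₀ t x : ℝ) / t) :=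
  ⟨isBoundedUnder_of ⟨1, fun t => div_le_one_of_le₀ (mod_cast ccaNe_le t x) t.cast_nonneg⟩,
    isBoundedUnder_of ⟨0, fun _ => by positivity⟩⟩

theorem tendsto_ccaNe_div_sub_ccaNe_div (hconn : G.Connected) (x y : V) :
    Tendsto (fun t : ℕ => (ccaNe G X₀ t x : ℝ) / t - (ccaNe G X₀ t y : ℝ) / t) atTop
      (𝓝 0) := by
  have hbound (t : ℕ) := abs_le.1 (abs_ccaNe_sub_ccaNe_le_dist (X₀ := X₀) hconn t y x)
  simp_rw [← sub_div]
  refine tendsto_bdd_div_atTop_nhds_zero (b := -(2 * G.dist y x : ℝ)) (B := 2 * G.dist y x)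
    (.of_forall fun t => ?_) (.of_forall fun t => ?_) tendsto_natCast_atTop_atTop
  · exact_mod_cast (hbound t).1
  · exact_mod_cast (hbound t).2

end CCA

theorem cca_boundedness_and_activity_independent_of_vertex_general (G : SimpleGraph V)
    (hconn : G.Connected)
    (X₀ : V → ZMod 3) :
    ((∃ x : V, ∃ C : ℕ, ∀ t : ℕ, ccaNe G X₀ t x ≤ C) →
      ∀ y : V, ∃ C : ℕ, ∀ t : ℕ, ccaNe G X₀ t y ≤ C) ∧
    (∀ x y : V,
      limsup (fun t : ℕ => (ccaNe G X₀ t x : ℝ) / t) atTop =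
      limsup (fun t : ℕ => (ccaNe G X₀ t y : ℝ) / t) atTop) := by
  refine ⟨fun ⟨x, C, hC⟩ y => ⟨C + 2 * G.dist x y, fun t => ?_⟩, fun x y => ?_⟩
  · have hxy := abs_le.1 (abs_ccaNe_sub_ccaNe_le_dist (X₀ := X₀) hconn t x y)
    have hCt := hC t
    omega
  · obtain ⟨hx, hx'⟩ := isBoundedUnder_ccaNe_div (G := G) (X₀ := X₀) x
    obtain ⟨hy, hy'⟩ := isBoundedUnder_ccaNe_div (G := G) (X₀ := X₀) y
    exact limsup_eq_limsup_of_tendsto_sub_nhds_zero hx hx' hy hy'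
      (tendsto_ccaNe_div_sub_ccaNe_div hconn x y)

/-- If the number of excitations is bounded in time at some vertex, it is bounded at every
vertex; and the limsup of `ne_t(x)/t` is the same for all vertices. -/
theorem cca_boundedness_and_activity_independent_of_vertex (G : SimpleGraph V)
    (hlf : ∀ v : V, (G.neighborSet v).Finite) (hconn : G.Connected)
    (X₀ : V → ZMod 3) :
    ((∃ x : V, ∃ C : ℕ, ∀ t : ℕ, ccaNe G X₀ t x ≤ C) →
      ∀ y : V, ∃ C : ℕ, ∀ t : ℕ, ccaNe G X₀ t y ≤ C) ∧
    (∀ x y : V,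
      limsup (fun t : ℕ => (ccaNe G X₀ t x : ℝ) / t) atTop =
      limsup (fun t : ℕ => (ccaNe G X₀ t y : ℝ) / t) atTop) :=
  cca_boundedness_and_activity_independent_of_vertex_general G hconn X₀
end
end

section
/- Let G=(V,E) be a finite connected simple graph and (X_t)_{t≥0} the 3-color CCA trajectory of an initial 3-coloring X_0 : V → ℤ/3ℤ. If dX_0 is not irrotational, then for every vertex x ∈ V the limit lim_{t→∞} ne_t(x)/t exists and equals max over all closed directed cycles C of (1/|V(C)|) ∮_C dX_0. -/
noncomputable section
attribute [local instance] Classical.propDecidable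

open Filter

variable {V : Type*}

/-!
The one-form of `X_t` is `dX₀ + d ne_t` on every edge, and a vertex fires exactly when it has a
neighbour across an edge where this form is `+1`. Hence `ne_{t+1}(v) ≥ ne_t(u) + dX₀(v,u)` for
every edge `vu`, with equality along some edge whenever `v` fires, so `ne_t(x)` is the largest
integral of `dX₀` over walks of length `≤ t` starting at `x`. Removing loops from such a walk
(`Walk.bypass`) strips off cycles and edges traversed back and forth, which bounds its integral by
`M · length + |V|` for the maximal cycle mean `M ≥ 0`; conversely, a walk to an optimal cycle
followed by windings around it gives `ne_t(x) ≥ M t - C`.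
-/

namespace ZMod

lemma intCast_repInt (a : ZMod 3) : (a.repInt : ZMod 3) = a := by
  revert a; decide

lemma repInt_neg (a : ZMod 3) : (-a).repInt = -a.repInt := by
  revert a; decide

lemma repInt_eq_one_iff {a : ZMod 3} : a.repInt = 1 ↔ a = 1 := by
  revert a; decide

lemma abs_repInt_le_one_s6 (a : ZMod 3) : |a.repInt| ≤ 1 := by
  revert a; decide

lemma repInt_intCast {k : ℤ} (hk : |k| ≤ 1) : (k : ZMod 3).repInt = k := by
  obtain ⟨h₁, h₂⟩ := abs_le.1 hk
  interval_cases k <;> decide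

end ZMod

theorem SimpleGraph.Walk.IsCycle.length_le_card [Fintype V] {G : SimpleGraph V} {v : V}
    {c : G.Walk v v} (hc : c.IsCycle) : c.length ≤ Fintype.card V := by
  have := hc.support_nodup.length_le_card
  rwa [List.length_tail, Walk.length_support, Nat.add_sub_cancel] at this

theorem tendsto_div_of_mul_sub_le_of_le_mul_add {f : ℕ → ℝ} {a C D : ℝ}
    (hlo : ∀ t, a * t - C ≤ f t) (hhi : ∀ t, f t ≤ a * t + D) :
    Tendsto (fun t : ℕ => f t / t) atTop (nhds a) := by
  have hC := (tendsto_const_div_atTop_nhds_zero_nat C).const_sub a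
  have hD := (tendsto_const_div_atTop_nhds_zero_nat D).const_add a
  rw [sub_zero] at hC
  rw [add_zero] at hD
  refine tendsto_of_tendsto_of_tendsto_of_le_of_le' hC hD ?_ ?_ <;>
    filter_upwards [eventually_gt_atTop 0] with t ht <;>
    have ht : (0 : ℝ) < t := by exact_mod_cast ht
  · rw [le_div_iff₀ ht, sub_mul, div_mul_cancel₀ _ ht.ne']
    exact hlo t
  · rw [div_le_iff₀ ht, add_mul, div_mul_cancel₀ _ ht.ne']
    exact hhi t

namespace CCA

open SimpleGraph

section OneForm

variable (X : V → ZMod 3)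

lemma dXcca_swap (u v : V) : dXcca X v u = -dXcca X u v := by
  rw [dXcca, dXcca, ← ZMod.repInt_neg, neg_sub]

lemma abs_dXcca_le_one (u v : V) : |dXcca X u v| ≤ 1 :=
  ZMod.abs_repInt_le_one_s6 _

lemma dXcca_eq_one_iff {u v : V} : dXcca X u v = 1 ↔ X v = X u + 1 := by
  rw [dXcca, ZMod.repInt_eq_one_iff, sub_eq_iff_eq_add']

lemma dXcca_eq_of_intCast_eq {u v : V} {k : ℤ} (hk : |k| ≤ 1) (h : (k : ZMod 3) = X v - X u) :
    dXcca X u v = k := by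
  rw [dXcca, ← h, ZMod.repInt_intCast hk]

variable {G : SimpleGraph V}

@[simp] lemma walkIntCCA_nil {x : V} : walkIntCCA X (Walk.nil : G.Walk x x) = 0 := rfl

@[simp] lemma walkIntCCA_cons {x y z : V} (h : G.Adj x y) (p : G.Walk y z) :
    walkIntCCA X (Walk.cons h p) = dXcca X x y + walkIntCCA X p := by
  simp [walkIntCCA]

lemma walkIntCCA_append {x y z : V} (p : G.Walk x y) (q : G.Walk y z) :
    walkIntCCA X (p.append q) = walkIntCCA X p + walkIntCCA X q := by
  simp [walkIntCCA, Walk.darts_append]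

lemma walkIntCCA_reverse {x y : V} (p : G.Walk x y) :
    walkIntCCA X p.reverse = -walkIntCCA X p := by
  induction p with
  | nil => rfl
  | cons h p ih =>
    rw [Walk.reverse_cons, walkIntCCA_append, walkIntCCA_cons, walkIntCCA_cons, ih,
      dXcca_swap, walkIntCCA_nil]
    ring

lemma abs_walkIntCCA_le_length {x y : V} (p : G.Walk x y) : |walkIntCCA X p| ≤ p.length := by
  induction p with
  | nil => simp
  | @cons a b _ h p ih =>
    rw [walkIntCCA_cons, Walk.length_cons, Nat.cast_succ, add_comm _ (1 : ℤ)]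
    exact (abs_add_le _ _).trans (add_le_add (abs_dXcca_le_one X a b) ih)

end OneForm

section Dynamics

variable (G : SimpleGraph V) (X₀ : V → ZMod 3)

lemma ccaTraj_succ (t : ℕ) : ccaTraj G X₀ (t + 1) = ccaStep G (ccaTraj G X₀ t) :=
  Function.iterate_succ_apply' _ _ _

lemma ccaExcited_iff {t : ℕ} {v : V} :
    ccaExcited G X₀ t v ↔ ∃ u, G.Adj v u ∧ dXcca (ccaTraj G X₀ t) v u = 1 := by
  simp only [dXcca_eq_one_iff, ccaExcited, ccaTraj_succ, ccaStep]
  split_ifs with h <;> simp [h]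

lemma ccaTraj_succ_apply (t : ℕ) (v : V) :
    ccaTraj G X₀ (t + 1) v = ccaTraj G X₀ t v + if ccaExcited G X₀ t v then 1 else 0 := by
  simp only [ccaExcited_iff, dXcca_eq_one_iff, ccaTraj_succ, ccaStep]
  split_ifs <;> simp

lemma ccaNe_succ (t : ℕ) (v : V) :
    ccaNe G X₀ (t + 1) v = ccaNe G X₀ t v + if ccaExcited G X₀ t v then 1 else 0 := by
  simp only [ccaNe, Finset.range_add_one, Finset.filter_insert]
  split_ifs <;> simp

lemma ccaTraj_eq_add_ccaNe (t : ℕ) (v : V) : ccaTraj G X₀ t v = X₀ v + ccaNe G X₀ t v := by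
  induction t with
  | zero => simp [ccaTraj, ccaNe]
  | succ t ih =>
    rw [ccaTraj_succ_apply, ccaNe_succ, ih]
    split_ifs <;> push_cast <;> ring

lemma dXcca_ccaTraj {v u : V} (h : G.Adj v u) (t : ℕ) :
    dXcca (ccaTraj G X₀ t) v u = dXcca X₀ v u + ccaNe G X₀ t u - ccaNe G X₀ t v := by
  induction t with
  | zero => simp [ccaTraj, ccaNe]
  | succ t ih =>
    refine dXcca_eq_of_intCast_eq _ ?_ ?_
    -- an edge where the form is `1` makes `v` fire and one where it is `-1` makes `u` fire
    · have hv : dXcca (ccaTraj G X₀ t) v u = 1 → ccaExcited G X₀ t v :=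
        fun h₁ => (ccaExcited_iff G X₀).2 ⟨u, h, h₁⟩
      have hu : dXcca (ccaTraj G X₀ t) v u = -1 → ccaExcited G X₀ t u :=
        fun h₁ => (ccaExcited_iff G X₀).2 ⟨v, h.symm, by rw [dXcca_swap, h₁, neg_neg]⟩
      have hd := abs_le.1 (abs_dXcca_le_one (ccaTraj G X₀ t) v u)
      rw [ccaNe_succ, ccaNe_succ, abs_le]
      push_cast
      split_ifs with hexu hexv hexv <;> grind
    · push_cast
      rw [ccaTraj_eq_add_ccaNe, ccaTraj_eq_add_ccaNe, dXcca, ZMod.intCast_repInt]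
      ring

lemma ccaNe_add_dXcca_le_ccaNe_succ {v u : V} (h : G.Adj v u) (t : ℕ) :
    (ccaNe G X₀ t u : ℤ) + dXcca X₀ v u ≤ ccaNe G X₀ (t + 1) v := by
  have hinv := dXcca_ccaTraj G X₀ h t
  have hle := (abs_le.1 (abs_dXcca_le_one (ccaTraj G X₀ t) v u)).2
  rw [ccaNe_succ]
  split_ifs with hexc
  · push_cast; omega
  · have : dXcca (ccaTraj G X₀ t) v u ≠ 1 := fun h₁ => hexc ((ccaExcited_iff G X₀).2 ⟨u, h, h₁⟩)
    push_cast; omega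

lemma exists_adj_ccaNe_succ_eq {t : ℕ} {v : V} (hexc : ccaExcited G X₀ t v) :
    ∃ u, G.Adj v u ∧ (ccaNe G X₀ (t + 1) v : ℤ) = ccaNe G X₀ t u + dXcca X₀ v u := by
  obtain ⟨u, h, h₁⟩ := (ccaExcited_iff G X₀).1 hexc
  have hinv := dXcca_ccaTraj G X₀ h t
  refine ⟨u, h, ?_⟩
  rw [ccaNe_succ, if_pos hexc]
  push_cast; omega

lemma walkIntCCA_le_ccaNe {x y : V} (w : G.Walk x y) {t : ℕ} (ht : w.length ≤ t) :
    walkIntCCA X₀ w ≤ ccaNe G X₀ t x := by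
  induction w generalizing t with
  | nil => simp
  | cons h w ih =>
    obtain ⟨s, rfl⟩ : ∃ s, t = s + 1 := Nat.exists_eq_add_one.2 (by simp at ht; omega)
    rw [walkIntCCA_cons]
    have := ih (t := s) (by simp at ht; omega)
    have := ccaNe_add_dXcca_le_ccaNe_succ G X₀ h s
    omega

lemma exists_walk_ccaNe_le_walkIntCCA (t : ℕ) (x : V) :
    ∃ (y : V) (w : G.Walk x y), w.length ≤ t ∧ ccaNe G X₀ t x ≤ walkIntCCA X₀ w := by
  induction t generalizing x with
  | zero => exact ⟨x, .nil, le_rfl, by simp [ccaNe]⟩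
  | succ t ih =>
    by_cases hexc : ccaExcited G X₀ t x
    · obtain ⟨u, h, heq⟩ := exists_adj_ccaNe_succ_eq G X₀ hexc
      obtain ⟨y, w, hlen, hle⟩ := ih u
      refine ⟨y, .cons h w, by simpa using hlen, ?_⟩
      rw [walkIntCCA_cons]
      omega
    · obtain ⟨y, w, hlen, hle⟩ := ih x
      refine ⟨y, w, hlen.trans t.le_succ, ?_⟩
      rwa [ccaNe_succ, if_neg hexc, add_zero]

end Dynamics

section CycleBound

variable {G : SimpleGraph V} (X : V → ZMod 3) {M : ℝ}

lemma walkIntCCA_cons_le_of_isPath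
    (hcyc : ∀ ⦃v : V⦄ (c : G.Walk v v), c.IsCycle → (walkIntCCA X c : ℝ) ≤ M * c.length)
    (hM : 0 ≤ M) {u v : V} (h : G.Adj u v) {q : G.Walk v u} (hq : q.IsPath) :
    (walkIntCCA X (.cons h q) : ℝ) ≤ M * (q.length + 1) := by
  by_cases he : s(u, v) ∈ q.edges
  · rw [Sym2.eq_swap] at he
    rw [hq.eq_adj_toWalk_of_mem_edges he]
    simp [dXcca_swap X u v]
    positivity
  · simpa using hcyc _ ((Walk.cons_isCycle_iff q h).2 ⟨hq, he⟩)

lemma walkIntCCA_sub_walkIntCCA_bypass_le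
    (hcyc : ∀ ⦃v : V⦄ (c : G.Walk v v), c.IsCycle → (walkIntCCA X c : ℝ) ≤ M * c.length)
    (hM : 0 ≤ M) {x y : V} (p : G.Walk x y) :
    (walkIntCCA X p - walkIntCCA X p.bypass : ℝ) ≤ M * (p.length - p.bypass.length) := by
  induction p with
  | nil => simp [Walk.bypass]
  | @cons u v w h p ih =>
    simp only [Walk.bypass]
    split_ifs with hs
    · have hloop := walkIntCCA_cons_le_of_isPath X hcyc hM h (p.bypass_isPath.takeUntil hs)
      have hint := walkIntCCA_append X (p.bypass.takeUntil u hs) (p.bypass.dropUntil u hs)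
      have hlen := Walk.length_append (p.bypass.takeUntil u hs) (p.bypass.dropUntil u hs)
      rw [Walk.take_spec] at hint hlen
      rw [hint, hlen] at ih
      simp only [walkIntCCA_cons, Walk.length_cons] at hloop ⊢
      push_cast at ih hloop ⊢
      linear_combination ih + hloop
    · simpa using ih

end CycleBound

section CycleMeans

variable (G : SimpleGraph V) (X : V → ZMod 3)

def cycleMeans : Set ℝ :=
  {r : ℝ | ∃ (v : V) (c : G.Walk v v), c.IsCycle ∧ r = (walkIntCCA X c : ℝ) / (c.length : ℝ)}

lemma cycleMeans_finite [Fintype V] : (cycleMeans G X).Finite := by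
  let n := Fintype.card V
  refine (((Set.finite_Icc (-n : ℤ) n).prod (Set.finite_Iic n)).image
    fun q : ℤ × ℕ => (q.1 : ℝ) / q.2).subset ?_
  rintro r ⟨v, c, hc, rfl⟩
  have hlen := hc.length_le_card
  have hint := abs_le.1 (abs_walkIntCCA_le_length X c)
  exact ⟨(walkIntCCA X c, c.length), ⟨⟨by omega, by omega⟩, hlen⟩, rfl⟩

variable {G X} {M : ℝ}

lemma nonneg_of_mem_upperBounds_cycleMeans {v : V} {c : G.Walk v v} (hc : c.IsCycle)
    (hM : M ∈ upperBounds (cycleMeans G X)) : 0 ≤ M := by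
  rcases le_total 0 (walkIntCCA X c) with h | h
  · exact le_trans (by positivity) (hM ⟨v, c, hc, rfl⟩)
  · refine le_trans (div_nonneg ?_ (Nat.cast_nonneg _)) (hM ⟨v, c.reverse, hc.reverse, rfl⟩)
    rw [walkIntCCA_reverse, Int.cast_neg, neg_nonneg]
    exact_mod_cast h

lemma walkIntCCA_le_mul_length_of_mem_upperBounds (hM : M ∈ upperBounds (cycleMeans G X))
    ⦃v : V⦄ (c : G.Walk v v) (hc : c.IsCycle) : (walkIntCCA X c : ℝ) ≤ M * c.length := by
  have hpos : (0 : ℝ) < c.length := Nat.cast_pos.2 (by have := hc.three_le_length; omega)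
  exact (div_le_iff₀ hpos).1 (hM ⟨v, c, hc, rfl⟩)

end CycleMeans

section Rate

variable {G : SimpleGraph V} (X₀ : V → ZMod 3) {M : ℝ}

lemma walkIntCCA_le_mul_length_add_card [Fintype V]
    (hcyc : ∀ ⦃v : V⦄ (c : G.Walk v v), c.IsCycle → (walkIntCCA X₀ c : ℝ) ≤ M * c.length)
    (hM : 0 ≤ M) {x y : V} (p : G.Walk x y) :
    (walkIntCCA X₀ p : ℝ) ≤ M * p.length + Fintype.card V := by
  have hbypass := walkIntCCA_sub_walkIntCCA_bypass_le X₀ hcyc hM p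
  have hpath : (walkIntCCA X₀ p.bypass : ℝ) ≤ p.bypass.length := by
    exact_mod_cast (le_abs_self _).trans (abs_walkIntCCA_le_length X₀ _)
  have hcard : (p.bypass.length : ℝ) ≤ Fintype.card V := by
    exact_mod_cast p.bypass_isPath.length_lt.le
  have : 0 ≤ M * p.bypass.length := by positivity
  linarith

lemma ccaNe_le_mul_add_card [Fintype V]
    (hcyc : ∀ ⦃v : V⦄ (c : G.Walk v v), c.IsCycle → (walkIntCCA X₀ c : ℝ) ≤ M * c.length)
    (hM : 0 ≤ M) (t : ℕ) (x : V) : (ccaNe G X₀ t x : ℝ) ≤ M * t + Fintype.card V := by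
  obtain ⟨y, w, hlen, hle⟩ := exists_walk_ccaNe_le_walkIntCCA G X₀ t x
  calc (ccaNe G X₀ t x : ℝ) ≤ walkIntCCA X₀ w := by exact_mod_cast hle
    _ ≤ M * w.length + Fintype.card V := walkIntCCA_le_mul_length_add_card X₀ hcyc hM w
    _ ≤ M * t + Fintype.card V := by gcongr

lemma exists_walk_length_eq_mul {v : V} (c : G.Walk v v) (k : ℕ) :
    ∃ w : G.Walk v v, w.length = k * c.length ∧ walkIntCCA X₀ w = k * walkIntCCA X₀ c := by
  induction k with
  | zero => exact ⟨.nil, by simp, by simp⟩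
  | succ k ih =>
    obtain ⟨w, hlen, hint⟩ := ih
    exact ⟨c.append w, by rw [Walk.length_append, hlen]; ring,
      by rw [walkIntCCA_append, hint]; push_cast; ring⟩

lemma exists_mul_sub_le_ccaNe (hconn : G.Connected) {v : V} {c : G.Walk v v}
    (hc : 0 < c.length) (hM : 0 ≤ M) (hMc : M * c.length = walkIntCCA X₀ c) (x : V) :
    ∃ C, ∀ t, M * t - C ≤ ccaNe G X₀ t x := by
  obtain ⟨p⟩ := hconn.preconnected x v
  refine ⟨M * (p.length + c.length) + p.length, fun t => ?_⟩
  rcases lt_or_ge t p.length with ht | ht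
  · have : M * t ≤ M * p.length := by gcongr
    have : 0 ≤ M * c.length := by positivity
    have : (0 : ℝ) ≤ ccaNe G X₀ t x := Nat.cast_nonneg _
    linarith
  set k := (t - p.length) / c.length
  obtain ⟨w, hwlen, hwint⟩ := exists_walk_length_eq_mul X₀ c k
  have hfit : (p.append w).length ≤ t := by
    have : k * c.length ≤ t - p.length := Nat.div_mul_le_self _ _
    rw [Walk.length_append, hwlen]
    omega
  have hk : (t : ℝ) - p.length - c.length ≤ k * c.length := by
    have hlt : t - p.length < k * c.length + c.length := Nat.lt_div_mul_add hc
    have : ((t - p.length : ℕ) : ℝ) < k * c.length + c.length := by exact_mod_cast hlt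
    rw [Nat.cast_sub ht] at this
    linarith
  have hp : -(p.length : ℝ) ≤ walkIntCCA X₀ p := by
    exact_mod_cast neg_le_of_abs_le (abs_walkIntCCA_le_length X₀ p)
  calc M * t - (M * (p.length + c.length) + p.length)
      = M * (t - p.length - c.length) + -(p.length : ℝ) := by ring
    _ ≤ M * (k * c.length) + walkIntCCA X₀ p := add_le_add (by gcongr) hp
    _ = walkIntCCA X₀ (p.append w) := by
      rw [walkIntCCA_append, hwint]; push_cast; rw [← hMc]; ring
    _ ≤ ccaNe G X₀ t x := by exact_mod_cast walkIntCCA_le_ccaNe G X₀ (p.append w) hfit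

end Rate

end CCA

open CCA in
/-- On a finite connected graph, if `dX₀` is not irrotational, then for every vertex the
excitation rate `ne_t(x)/t` converges to the maximum over directed cycles `C` of
`(∮_C dX₀) / |V(C)|` (the number of distinct vertices of a cycle being its length). -/
theorem cca_activity_eq_max_cycle_mean [Fintype V] (G : SimpleGraph V)
    (hconn : G.Connected) (X₀ : V → ZMod 3)
    (hnirr : ¬ ∀ (v : V) (c : G.Walk v v), c.IsCycle → walkIntCCA X₀ c = 0) :
    ∃ M : ℝ,
      IsGreatest {r : ℝ | ∃ (v : V) (c : G.Walk v v), c.IsCycle ∧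
        r = (walkIntCCA X₀ c : ℝ) / (c.length : ℝ)} M ∧
      ∀ x : V, Tendsto (fun t : ℕ => (ccaNe G X₀ t x : ℝ) / t) atTop (nhds M) := by
  push Not at hnirr
  obtain ⟨v, c, hc, -⟩ := hnirr
  have hne : (cycleMeans G X₀).Nonempty := ⟨_, v, c, hc, rfl⟩
  have hM : IsGreatest (cycleMeans G X₀) (sSup (cycleMeans G X₀)) :=
    ⟨hne.csSup_mem (cycleMeans_finite G X₀),
      fun _ hr => le_csSup (cycleMeans_finite G X₀).bddAbove hr⟩
  set M := sSup (cycleMeans G X₀)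
  have hM₀ : 0 ≤ M := nonneg_of_mem_upperBounds_cycleMeans hc hM.2
  obtain ⟨v₀, c₀, hc₀, hMc₀⟩ := hM.1
  have hlen : 0 < c₀.length := by have := hc₀.three_le_length; omega
  refine ⟨M, hM, fun x => ?_⟩
  obtain ⟨C, hlower⟩ := exists_mul_sub_le_ccaNe X₀ hconn hlen hM₀
    ((eq_div_iff (Nat.cast_pos.2 hlen).ne').1 hMc₀) x
  exact tendsto_div_of_mul_sub_le_of_le_mul_add hlower
    (ccaNe_le_mul_add_card X₀ (walkIntCCA_le_mul_length_of_mem_upperBounds hM.2) hM₀ · x)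
end
end

section
/- Let T=(V,E) be a (locally finite) tree, (X_t)_{t≥0} the 3-color CCA trajectory of an initial 3-coloring X_0 : V → ℤ/3ℤ, and let y, z ∈ V with P the unique directed path in T from y to z. Then for every t ≥ 0: ∫_P dX_{t+1} − ∫_P dX_t = 1(z is excited at time t) − 1(y is excited at time t). -/
noncomputable section
attribute [local instance] Classical.propDecidable

open Filter

variable {V : Type*}

/-!
On an edge `(u, v)` each endpoint's color advances by `0` or `1`, so `dX(u, v)` changes by
`1(v excited) − 1(u excited)` unless the representative in `{-1, 0, 1}` wraps around. A wrap
would need `X v = X u + 1` with `u` not excited (or symmetrically), which the CCA rule forbids.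
Summing over the edges of any walk, the changes telescope to the endpoints.
-/

theorem ZMod.repInt_sub_sub_repInt_sub {a a' b b' : ZMod 3}
    (ha' : a' = a ∨ a' = a + 1) (hb' : b' = b ∨ b' = b + 1)
    (ha : b = a + 1 → a' = a + 1) (hb : a = b + 1 → b' = b + 1) :
    (b' - a').repInt - (b - a).repInt =
      (if b' = b + 1 then 1 else 0) - (if a' = a + 1 then 1 else 0) := by
  revert a a' b b'
  decide

theorem ccaStep_eq_or_eq_add_one (G : SimpleGraph V) (X : V → ZMod 3) (v : V) :
    ccaStep G X v = X v ∨ ccaStep G X v = X v + 1 := by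
  unfold ccaStep
  split_ifs <;> simp

theorem ccaStep_eq_add_one_of_adj {G : SimpleGraph V} (X : V → ZMod 3) {u v : V}
    (huv : G.Adj v u) (hX : X u = X v + 1) : ccaStep G X v = X v + 1 :=
  if_pos ⟨u, huv, hX⟩

theorem dXcca_ccaStep_sub {G : SimpleGraph V} (X : V → ZMod 3) {u v : V} (huv : G.Adj u v) :
    dXcca (ccaStep G X) u v - dXcca X u v =
      (if ccaStep G X v = X v + 1 then 1 else 0) -
        (if ccaStep G X u = X u + 1 then 1 else 0) :=
  ZMod.repInt_sub_sub_repInt_sub (ccaStep_eq_or_eq_add_one G X u)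
    (ccaStep_eq_or_eq_add_one G X v) (ccaStep_eq_add_one_of_adj X huv)
    (ccaStep_eq_add_one_of_adj X huv.symm)

theorem walkIntCCA_ccaStep_sub {G : SimpleGraph V} (X : V → ZMod 3) {y z : V}
    (p : G.Walk y z) :
    walkIntCCA (ccaStep G X) p - walkIntCCA X p =
      (if ccaStep G X z = X z + 1 then 1 else 0) -
        (if ccaStep G X y = X y + 1 then 1 else 0) := by
  induction p with
  | nil => simp [walkIntCCA]
  | cons huv q ih =>
    simp only [walkIntCCA, SimpleGraph.Walk.darts_cons, List.map_cons, List.sum_cons] at ih ⊢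
    linear_combination dXcca_ccaStep_sub X huv + ih

theorem ccaTraj_succ (G : SimpleGraph V) (X₀ : V → ZMod 3) (t : ℕ) :
    ccaTraj G X₀ (t + 1) = ccaStep G (ccaTraj G X₀ t) :=
  Function.iterate_succ_apply' (ccaStep G) t X₀

theorem cca_path_integral_flux_general (G : SimpleGraph V) (X₀ : V → ZMod 3)
    (y z : V) (p : G.Walk y z) (t : ℕ) :
    walkIntCCA (ccaTraj G X₀ (t + 1)) p - walkIntCCA (ccaTraj G X₀ t) p =
      (if ccaExcited G X₀ t z then 1 else 0) - (if ccaExcited G X₀ t y then 1 else 0) := by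
  simpa only [ccaExcited, ccaTraj_succ] using walkIntCCA_ccaStep_sub (ccaTraj G X₀ t) p

/-- On a locally finite tree, for vertices `y, z` with (unique) path `p` from `y` to `z`,
the change of the path integral of `dX_t` over one CCA time step equals
`1(z excited at t) − 1(y excited at t)`. -/
theorem cca_path_integral_flux (G : SimpleGraph V) (htree : G.IsTree)
    (hlf : ∀ v : V, (G.neighborSet v).Finite) (X₀ : V → ZMod 3)
    (y z : V) (p : G.Walk y z) (hp : p.IsPath) (t : ℕ) :
    walkIntCCA (ccaTraj G X₀ (t + 1)) p - walkIntCCA (ccaTraj G X₀ t) p =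
      (if ccaExcited G X₀ t z then 1 else 0) - (if ccaExcited G X₀ t y then 1 else 0) :=
  cca_path_integral_flux_general G X₀ y z p t
end
end
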